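/- arXiv:1612.09020 — 11 statements merged into one kernel-verified Lean document; each statement's English description precedes it below -/
import Mathlib

section
/- Assume f has nonzero Hessian. If A is a prolongation of f with character χ = 0, then A = 0. Equivalently, the linear map sending a prolongation A of f to its character χ^A ∈ W* is injective. -/
/-- If `f` has nonzero Hessian and `A` is a prolongation of `f` with
character `χ = 0`, then `A = 0`; i.e. the map sending a prolongation to its character
is injective. -/
theorem prolongation_character_injective
    {W : Type*} [AddCommGroup W] [Module ℂ W] [FiniteDimensional ℂ W]
    (f : W →ₗ[ℂ] W →ₗ[ℂ] W →ₗ[ℂ] ℂ)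
    (hsym1 : ∀ u v w : W, f u v w = f v u w)
    (hsym2 : ∀ u v w : W, f u v w = f u w v)
    (hHess : ∃ w : W, ∀ v : W, f w v = 0 → v = 0)
    (A : W →ₗ[ℂ] W →ₗ[ℂ] W) (hAsym : ∀ u v : W, A u v = A v u)
    (χ : W →ₗ[ℂ] ℂ) (hχ : χ = 0)
    (hA : ∀ s u v w : W,
      f (A w u) v s + f u (A w v) s + f u v (A w s) = χ w * f u v s) :
    A = 0 := by
  subst hχ
  simp only [LinearMap.zero_apply, zero_mul] at hA
  obtain ⟨w₀, hw⟩ := hHess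
  -- full symmetry: move third slot to front
  have hsym3 : ∀ u v w : W, f u v w = f w u v := by
    intro u v w
    rw [hsym2, hsym1]
  -- Eq1 : f (A b a) a a = 0
  have Eq1 : ∀ a b : W, f (A b a) a a = 0 := by
    intro a b
    have h := hA a a a b
    rw [hsym1 a (A b a) a, hsym3 a a (A b a)] at h
    linear_combination h / 3
  -- Eq2 : f (A a a) a b = 0
  have Eq2 : ∀ a b : W, f (A a a) a b = 0 := by
    intro a b
    have h := hA b a a a
    rw [hsym1 a (A a a) b, hsym3 a a (A a b), hAsym a b, Eq1 a b] at h
    linear_combination h / 2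
  -- Eq34 : polarization of Eq2 in its first variable
  have Eq34 : ∀ a c b : W,
      f (A a a) c b + 2 * f (A a c) a b + 2 * f (A a c) c b + f (A c c) a b = 0 := by
    intro a c b
    have h := Eq2 (a + c) b
    simp only [map_add, LinearMap.add_apply] at h
    rw [hAsym c a, Eq2 a b, Eq2 c b] at h
    linear_combination h
  -- Eq3 : 2 * f (A a c) a b + f (A a a) c b = 0
  have Eq3 : ∀ a c b : W, 2 * f (A a c) a b + f (A a a) c b = 0 := by
    intro a c b
    have h1 := Eq34 a c b
    have h2 := Eq34 a (-c) b
    simp only [map_neg, LinearMap.neg_apply] at h2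
    linear_combination (h1 - h2) / 2
  -- Step A : A w₀ w₀ = 0
  have hAw0w0 : A w₀ w₀ = 0 := by
    apply hw
    ext b
    simp only [LinearMap.zero_apply]
    rw [hsym1 w₀ (A w₀ w₀) b]
    exact Eq2 w₀ b
  -- Step B : A w₀ c = 0
  have hAw0 : ∀ c : W, A w₀ c = 0 := by
    intro c
    apply hw
    ext b
    simp only [LinearMap.zero_apply]
    rw [hsym1 w₀ (A w₀ c) b]
    have h := Eq3 w₀ c b
    rw [hAw0w0] at h
    simp only [map_zero, LinearMap.zero_apply] at h
    linear_combination h / 2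
  -- Step C : A c c = 0
  have hAcc : ∀ c : W, A c c = 0 := by
    intro c
    apply hw
    ext b
    simp only [LinearMap.zero_apply]
    rw [hsym1 w₀ (A c c) b]
    have h := Eq3 c w₀ b
    rw [hAsym c w₀, hAw0 c] at h
    simp only [map_zero, LinearMap.zero_apply] at h
    linear_combination h
  -- Conclude
  ext u v
  simp only [LinearMap.zero_apply]
  have h := hAcc (u + v)
  simp only [map_add, LinearMap.add_apply] at h
  rw [hAcc u, hAcc v, hAsym v u] at h
  have h2 : (2 : ℂ) • A u v = 0 := by
    rw [two_smul]
    linear_combination (norm := module) h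
  simpa using h2
end

section
/- Let A be a prolongation of f with character χ. Then for every w ∈ Ŷ and every u ∈ W one has f(w, w, A_{wu}) = 0 and f(A_{ww}, w, u) = (χ(w)/2)·f(w, w, u). In particular f_{A_{ww},w} ∈ ℂ·f_{ww}, i.e. A_{ww} ∈ Γ_w. -/
/-- For a prolongation `A` of `f` with character `χ` and `w ∈ Ŷ`:
`f(w,w,A_{wu}) = 0`, `f(A_{ww},w,u) = (χ(w)/2)·f(w,w,u)`, and hence
`f_{A_{ww},w} = (χ(w)/2)·f_{ww}`, i.e. `A_{ww} ∈ Γ_w`. -/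
theorem prolongation_Aww_in_gauss_space
    {W : Type*} [AddCommGroup W] [Module ℂ W] [FiniteDimensional ℂ W]
    (f : W →ₗ[ℂ] W →ₗ[ℂ] W →ₗ[ℂ] ℂ)
    (hsym1 : ∀ u v w : W, f u v w = f v u w)
    (hsym2 : ∀ u v w : W, f u v w = f u w v)
    (A : W →ₗ[ℂ] W →ₗ[ℂ] W) (hAsym : ∀ u v : W, A u v = A v u)
    (χ : W →ₗ[ℂ] ℂ)
    (hA : ∀ s u v w : W,
      f (A w u) v s + f u (A w v) s + f u v (A w s) = χ w * f u v s)
    (w : W) (hw : f w w w = 0) :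
    (∀ u : W, f w w (A w u) = 0)
    ∧ (∀ u : W, f (A w w) w u = χ w / 2 * f w w u)
    ∧ f (A w w) w = (χ w / 2) • f w w := by
  have h1 : ∀ u : W, f w w (A w u) = 0 := by
    intro u
    have := hA w w w u
    rw [hw, mul_zero] at this
    rw [hAsym u w] at this
    have e1 : f (A w u) w w = f w w (A w u) := by rw [hsym1, hsym2]
    have e2 : f w (A w u) w = f w w (A w u) := by rw [hsym2]
    rw [e1, e2] at this
    linear_combination this / 3
  have h2 : ∀ u : W, f (A w w) w u = χ w / 2 * f w w u := by
    intro u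
    have := hA u w w w
    have e2 : f w (A w w) u = f (A w w) w u := by rw [hsym1]
    rw [e2, h1 u] at this
    linear_combination this / 2
  refine ⟨h1, h2, ?_⟩
  ext u
  simpa using h2 u
end

section
/- Let φ be an infinitesimal automorphism of f, and let w, v ∈ W satisfy: f_{ww} ≠ 0; v ∈ Γ_w; φ(w) ∈ Γ_w; φ(w) ∈ Γ_v; and {u ∈ W : f(v,v,u) = 0} = {u ∈ W : f(w,w,u) = 0}. Then φ(v) ∈ Γ_w. (These hypotheses encode the genericity of v in the Gauss fiber Γ_w in Proposition 4.3(2) of the paper.) -/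
/-- Two functionals with the same kernel (as sets), the second nonzero, are
proportional. -/
lemma prop_of_ker_eq {W : Type*} [AddCommGroup W] [Module ℂ W]
    [FiniteDimensional ℂ W] (g h : W →ₗ[ℂ] ℂ)
    (hker : {u : W | g u = 0} = {u : W | h u = 0}) (hh : h ≠ 0) :
    ∃ a : ℂ, g = a • h := by
  obtain ⟨x, hx⟩ : ∃ x, h x ≠ 0 := by
    by_contra hc
    push_neg at hc
    exact hh (LinearMap.ext fun x => hc x)
  have hgx : g x ≠ 0 := by
    intro h0
    have : x ∈ {u : W | g u = 0} := h0
    rw [hker] at this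
    exact hx this
  refine ⟨g x / h x, ?_⟩
  have ha : g x / h x ≠ 0 := div_ne_zero hgx hx
  apply Module.Dual.eq_of_ker_eq_of_apply_eq x
  · rw [LinearMap.ker_smul _ _ ha]
    ext u
    simpa [LinearMap.mem_ker] using Set.ext_iff.mp hker u
  · simp [div_mul_cancel₀ _ hx]
  · exact hgx

/-- If `φ` is an infinitesimal automorphism of `f`, `f_{ww} ≠ 0`,
`v ∈ Γ_w`, `φ(w) ∈ Γ_w`, `φ(w) ∈ Γ_v`, and the tangent hyperplanes of `v` and
`w` coincide, then `φ(v) ∈ Γ_w`. -/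
theorem infinitesimal_automorphism_preserves_gauss_space
    {W : Type*} [AddCommGroup W] [Module ℂ W] [FiniteDimensional ℂ W]
    (f : W →ₗ[ℂ] W →ₗ[ℂ] W →ₗ[ℂ] ℂ)
    (hsym1 : ∀ u v w : W, f u v w = f v u w)
    (hsym2 : ∀ u v w : W, f u v w = f u w v)
    (φ : W →ₗ[ℂ] W) (c : ℂ)
    (hφ : ∀ u v s : W, f (φ u) v s + f u (φ v) s + f u v (φ s) = c * f u v s)
    (w v : W)
    (hww : f w w ≠ 0)
    (hv : ∃ c₁ : ℂ, f v w = c₁ • f w w)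
    (hφw : ∃ c₂ : ℂ, f (φ w) w = c₂ • f w w)
    (hφwv : ∃ c₃ : ℂ, f (φ w) v = c₃ • f v v)
    (htan : {u : W | f v v u = 0} = {u : W | f w w u = 0}) :
    ∃ c₄ : ℂ, f (φ v) w = c₄ • f w w := by
  obtain ⟨c₁, hc₁⟩ := hv
  obtain ⟨c₂, hc₂⟩ := hφw
  obtain ⟨c₃, hc₃⟩ := hφwv
  obtain ⟨lam, hlam⟩ := prop_of_ker_eq (f v v) (f w w) htan hww
  refine ⟨2 * c₁ * c₂ - lam * c₃, ?_⟩
  ext s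
  have h3 : f (φ w) w s = c₂ * f w w s := by rw [hc₂]; simp
  have h2 : f w (φ w) s = c₂ * f w w s := by
    rw [hsym1 w (φ w) s]; exact h3
  have hwws : f w w (φ s) = (c - 2 * c₂) * f w w s := by
    linear_combination hφ w w s - h2 - h3
  have h4 : f v (φ w) s = lam * c₃ * f w w s := by
    rw [hsym1 v (φ w) s, hc₃]
    simp only [LinearMap.smul_apply, smul_eq_mul]
    rw [hlam]
    simp only [LinearMap.smul_apply, smul_eq_mul]
    ring
  have h5 : f v w (φ s) = c₁ * ((c - 2 * c₂) * f w w s) := by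
    rw [hc₁]
    simp only [LinearMap.smul_apply, smul_eq_mul]
    rw [hwws]
  have h6 : f v w s = c₁ * f w w s := by rw [hc₁]; simp
  have goal : f (φ v) w s = (2 * c₁ * c₂ - lam * c₃) * f w w s := by
    linear_combination hφ v w s - h4 - h5 + c * h6
  simpa using goal
end

section
/- Assume f is irreducible and has nonzero Hessian, and let A be a nonzero prolongation of f with character χ. Suppose there are a, a' ∈ ℂ and linear maps h, h' : W* → W such that A_{ww} = 2a·χ(w)·w + h(f_{ww}) and A_{ww} = 2a'·χ(w)·w + h'(f_{ww}) for all w ∈ W. Then a = a' and h = h'. -/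
/-!
Subtracting the two presentations gives `d χ(w) • w = k (f w w)` with `d = 2 (a - a')` and
`k = h' - h`. If `d χ ≠ 0`, the range of `k` contains every `w`, so `k : W* → W` is invertible and
`f(w,w,w) = d χ(w) · (k⁻¹ w)(w)` factors, contradicting irreducibility. The case `χ = 0` cannot
occur: then `A = h ∘ f` and the prolongation identity says `f(u, u, h (f u w)) = 0` for all `u, w`,
which at a point `w₀` of nonzero Hessian forces `h = 0`, hence `A = 0`. So `a = a'`, and then
`k` vanishes on every `f u v`; these exhaust `W*` because `f w₀` is onto.
-/

open Module Function

section

variable {K W : Type*} [Field K] [AddCommGroup W] [Module K W]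

namespace LinearMap

theorem ext_of_symm [CharZero K] {M N : Type*} [AddCommGroup M] [Module K M]
    [AddCommGroup N] [Module K N] {B B' : M →ₗ[K] M →ₗ[K] N}
    (hB : ∀ u v, B u v = B v u) (hB' : ∀ u v, B' u v = B' v u) (h : ∀ w, B w w = B' w w) :
    B = B' := by
  ext u v
  have e := h (u + v)
  simp only [map_add, LinearMap.add_apply, h u, h v, hB v u, hB' v u] at e
  have h2 : (2 : K) • B u v = (2 : K) • B' u v := by
    linear_combination (norm := module) e
  exact smul_right_injective N two_ne_zero h2

theorem surjective_of_injective_dual [FiniteDimensional K W] {L : W →ₗ[K] Dual K W}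
    (hL : Injective L) : Surjective L :=
  (injective_iff_surjective_of_finrank_eq_finrank Subspace.dual_finrank_eq.symm).mp hL

theorem surjective_of_forall_smul_self_mem_range {V : Type*} [AddCommGroup V]
    [Module K V] {k : V →ₗ[K] W} {ψ : Dual K W} (hψ : ψ ≠ 0)
    (hk : ∀ w, ψ w • w ∈ LinearMap.range k) : Surjective k := by
  obtain ⟨w₁, hw₁⟩ : ∃ w₁, ψ w₁ ≠ 0 := by simpa [LinearMap.ext_iff] using hψ
  have hw₁mem : w₁ ∈ LinearMap.range k := (Submodule.smul_mem_iff _ hw₁).mp (hk w₁)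
  intro x
  suffices ψ w₁ • x ∈ LinearMap.range k from (Submodule.smul_mem_iff _ hw₁).mp this
  have hsum : ψ w₁ • x + ψ x • w₁ ∈ LinearMap.range k := by
    convert sub_mem (sub_mem (hk (w₁ + x)) (hk w₁)) (hk x) using 1
    simp only [map_add, add_smul, smul_add]
    abel
  simpa using sub_mem hsum (Submodule.smul_mem _ (ψ x) hw₁mem)

end LinearMap

theorem eq_zero_of_cubic_eq_zero [CharZero K] {f : W →ₗ[K] W →ₗ[K] W →ₗ[K] K}
    (hsym1 : ∀ u v w, f u v w = f v u w) (hsym2 : ∀ u v w, f u v w = f u w v)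
    (hf : ∀ w, f w w w = 0) : f = 0 := by
  have h₁ : ∀ u v, f u u v = - f v v u := by
    intro u v
    have e := hf (u + v)
    simp only [map_add, LinearMap.add_apply] at e
    linear_combination (e - hf u - hf v - hsym1 v u u - 2 * hsym2 u v u
      - 2 * hsym2 v u v - hsym1 u v v) / 3
  ext u v w
  show f u v w = 0
  have e := h₁ (u + w) v
  simp only [map_add, LinearMap.add_apply] at e
  linear_combination hsym2 u v w + (e - h₁ u v - h₁ w v - hsym1 w u v) / 2

theorem eq_zero_of_map_apply_self_eq_zero [CharZero K] [FiniteDimensional K W] {M : Type*}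
    [AddCommGroup M] [Module K M] {f : W →ₗ[K] W →ₗ[K] Dual K W}
    (hsym : ∀ u v, f u v = f v u) {w₀ : W} (hw₀ : Injective (f w₀))
    {k : Dual K W →ₗ[K] M} (hk : ∀ w, k (f w w) = 0) : k = 0 := by
  have hfk : f.compr₂ k = 0 :=
    LinearMap.ext_of_symm (fun u v => by simp [hsym u v]) (fun _ _ => rfl) hk
  refine LinearMap.ext fun α => ?_
  obtain ⟨w, rfl⟩ := LinearMap.surjective_of_injective_dual hw₀ α
  simpa using DFunLike.congr_fun (DFunLike.congr_fun hfk w₀) w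

theorem eq_zero_of_forall_apply_self_map_apply_eq_zero [CharZero K] [FiniteDimensional K W]
    {f : W →ₗ[K] W →ₗ[K] W →ₗ[K] K}
    (hsym1 : ∀ u v w, f u v w = f v u w) (hsym2 : ∀ u v w, f u v w = f u w v)
    {w₀ : W} (hw₀ : Injective (f w₀)) {h : Dual K W →ₗ[K] W}
    (hh : ∀ u w, f u u (h (f u w)) = 0) : h = 0 := by
  have hsurj := LinearMap.surjective_of_injective_dual hw₀
  have h₀ : ∀ α, f w₀ w₀ (h α) = 0 := by
    intro α
    obtain ⟨w, rfl⟩ := hsurj α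
    exact hh w₀ w
  have h₁ : ∀ v w, f w₀ v (h (f w₀ w)) = 0 := by
    intro v w
    -- `u ↦ f u u (h (f u w))` is cubic; its values at `v + w₀` and `v - w₀` sum to twice its part
    -- even in `w₀`, whose `w₀²`-coefficient is `2 f w₀ v (h (f w₀ w)) + f w₀ w₀ (h (f v w))`.
    have ep := hh (w₀ + v) w
    have em := hh (v - w₀) w
    simp only [map_add, map_sub, LinearMap.add_apply, LinearMap.sub_apply] at ep em
    linear_combination
      (ep + em - 2 * hh v w - 2 * h₀ (f v w)) / 4 - hsym1 v w₀ (h (f w₀ w)) / 2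
  refine LinearMap.ext fun α => ?_
  obtain ⟨w, rfl⟩ := hsurj α
  refine hw₀ (LinearMap.ext fun v => ?_)
  rw [hsym2, h₁]
  simp

theorem exists_symm_cubic_eq_mul [CharZero K] [FiniteDimensional K W]
    {f : W →ₗ[K] W →ₗ[K] W →ₗ[K] K} {ψ : Dual K W} (hψ : ψ ≠ 0) {k : Dual K W →ₗ[K] W} (hk : ∀ w, ψ w • w = k (f w w)) :
    ∃ B : W →ₗ[K] W →ₗ[K] K, (∀ u v, B u v = B v u) ∧ ∀ w, f w w w = ψ w * B w w := by
  have hsurj : Surjective k :=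
    LinearMap.surjective_of_forall_smul_self_mem_range hψ fun w => ⟨f w w, (hk w).symm⟩
  have hinj : Injective k :=
    (LinearMap.injective_iff_surjective_of_finrank_eq_finrank Subspace.dual_finrank_eq).mpr hsurj
  let e := LinearEquiv.ofBijective k ⟨hinj, hsurj⟩
  let g : W →ₗ[K] W →ₗ[K] K := e.symm.toLinearMap
  have hfg : ∀ w, f w w = ψ w • g w := fun w =>
    e.injective <| by
      rw [map_smul, LinearEquiv.coe_coe, e.apply_symm_apply]
      exact (hk w).symm
  refine ⟨(2 : K)⁻¹ • (g + g.flip), fun u v => by simp [add_comm], fun w => ?_⟩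
  simp only [hfg, LinearMap.smul_apply, LinearMap.add_apply, LinearMap.flip_apply, smul_eq_mul]
  ring

def IsProlongation (f : W →ₗ[K] W →ₗ[K] W →ₗ[K] K) (A : W →ₗ[K] W →ₗ[K] W) (χ : Dual K W) :
    Prop :=
  ∀ s u v w, f (A w u) v s + f u (A w v) s + f u v (A w s) = χ w * f u v s

theorem IsProlongation.eq_zero_of_apply_self_eq [CharZero K] [FiniteDimensional K W]
    {f : W →ₗ[K] W →ₗ[K] W →ₗ[K] K} {A : W →ₗ[K] W →ₗ[K] W} (hA : IsProlongation f A 0)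
    (hsym1 : ∀ u v w, f u v w = f v u w) (hsym2 : ∀ u v w, f u v w = f u w v)
    {w₀ : W} (hw₀ : Injective (f w₀)) (hAsym : ∀ u v, A u v = A v u)
    {h : Dual K W →ₗ[K] W} (hdiag : ∀ w, A w w = h (f w w)) : A = 0 := by
  have hAh : A = f.compr₂ h :=
    LinearMap.ext_of_symm hAsym (fun u v => by simp [LinearMap.ext (hsym1 u v)]) hdiag
  have hh : h = 0 := eq_zero_of_forall_apply_self_map_apply_eq_zero hsym1 hsym2 hw₀ fun u w => by
    have e := hA u u u w
    rw [hsym1 (A w u), hsym2 u (A w u), LinearMap.zero_apply, zero_mul] at e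
    have h3 : (3 : K) * f u u (A w u) = 0 := by linear_combination e
    simpa [hAsym w u, hAh, LinearMap.ext (hsym1 w u)] using h3
  rw [hAh, hh]
  ext
  simp

end

/-- For an irreducible `f` with nonzero Hessian and a nonzero
prolongation `A` of `f` with character `χ`, the constant `a` and the linear map
`h` in a presentation `A_{ww} = 2a·χ(w)·w + h(f_{ww})` are uniquely determined. -/
theorem prolongation_presentation_unique
    {W : Type*} [AddCommGroup W] [Module ℂ W] [FiniteDimensional ℂ W]
    (f : W →ₗ[ℂ] W →ₗ[ℂ] W →ₗ[ℂ] ℂ)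
    (hsym1 : ∀ u v w : W, f u v w = f v u w)
    (hsym2 : ∀ u v w : W, f u v w = f u w v)
    (hf : f ≠ 0)
    (hirr : ¬ ∃ (lam : W →ₗ[ℂ] ℂ) (B : W →ₗ[ℂ] W →ₗ[ℂ] ℂ),
      lam ≠ 0 ∧ B ≠ 0 ∧ (∀ u v : W, B u v = B v u) ∧ ∀ w : W, f w w w = lam w * B w w)
    (hHess : ∃ w : W, ∀ v : W, f w v = 0 → v = 0)
    (A : W →ₗ[ℂ] W →ₗ[ℂ] W) (hA0 : A ≠ 0) (hAsym : ∀ u v : W, A u v = A v u)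
    (χ : W →ₗ[ℂ] ℂ)
    (hA : ∀ s u v w : W,
      f (A w u) v s + f u (A w v) s + f u v (A w s) = χ w * f u v s)
    (a a' : ℂ) (h h' : (W →ₗ[ℂ] ℂ) →ₗ[ℂ] W)
    (heq : ∀ w : W, A w w = (2 * a * χ w) • w + h (f w w))
    (heq' : ∀ w : W, A w w = (2 * a' * χ w) • w + h' (f w w)) :
    a = a' ∧ h = h' := by
  obtain ⟨w₀, hw₀⟩ := hHess
  have hinj : Injective (f w₀) := (injective_iff_map_eq_zero _).2 hw₀
  have hχ : χ ≠ 0 := by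
    rintro rfl
    exact hA0 (IsProlongation.eq_zero_of_apply_self_eq hA hsym1 hsym2 hinj hAsym
      fun w => by simpa using heq w)
  have hdiff : ∀ w, ((2 * a - 2 * a') • χ) w • w = (h' - h) (f w w) := fun w => by
    simp only [LinearMap.smul_apply, LinearMap.sub_apply, smul_eq_mul, sub_smul]
    linear_combination (norm := module) (heq w).symm.trans (heq' w)
  have ha : a = a' := by
    by_contra hne
    have hψ : (2 * a - 2 * a') • χ ≠ 0 :=
      smul_ne_zero (by contrapose! hne; linear_combination hne / 2) hχ
    obtain ⟨B, hBsym, hfB⟩ := exists_symm_cubic_eq_mul hψ hdiff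
    refine hirr ⟨_, B, hψ, ?_, hBsym, hfB⟩
    rintro rfl
    exact hf (eq_zero_of_cubic_eq_zero hsym1 hsym2 fun w => by simpa using hfB w)
  subst ha
  refine ⟨rfl, (sub_eq_zero.1 (eq_zero_of_map_apply_self_eq_zero
    (fun u v => LinearMap.ext (hsym1 u v)) hinj fun w => ?_)).symm⟩
  simpa using (hdiff w).symm
end

section
/- Let g ∈ GL(W) and e ∈ ℂ with e ≠ 0 satisfy f(g(u), g(v), g(w)) = e·f(u,v,w) for all u, v, w ∈ W. Let A be a prolongation of f with character χ such that A_{uv} = a·χ(u)·v + a·χ(v)·u + h(f_{uv}) for all u, v ∈ W, where a ∈ ℂ and h : W* → W is linear. Define (g·A)_{uv} := g(A_{g⁻¹(u), g⁻¹(v)}). Then g·A is a prolongation of f with character χ∘g⁻¹, and (g·A)_{uv} = a·(χ∘g⁻¹)(u)·v + a·(χ∘g⁻¹)(v)·u + h'(f_{uv}) for all u, v ∈ W, where h' : W* → W is the linear map h'(α) = e⁻¹·g(h(α∘g)). -/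
/-- If `g ∈ GL(W)` scales `f` by `e ≠ 0` and `A` is a prolongation of
`f` with character `χ` of the special form `A_{uv} = a·χ(u)·v + a·χ(v)·u + h(f_{uv})`,
then `g·A` (defined by `(g·A)_{uv} = g(A_{g⁻¹u, g⁻¹v})`) is a prolongation of `f`
with character `χ∘g⁻¹`, of the same special form with `h'(α) = e⁻¹·g(h(α∘g))`. -/
theorem group_action_preserves_special_prolongations
    {W : Type*} [AddCommGroup W] [Module ℂ W] [FiniteDimensional ℂ W]
    (f : W →ₗ[ℂ] W →ₗ[ℂ] W →ₗ[ℂ] ℂ)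
    (hsym1 : ∀ u v w : W, f u v w = f v u w)
    (hsym2 : ∀ u v w : W, f u v w = f u w v)
    (g : W ≃ₗ[ℂ] W) (e : ℂ) (he : e ≠ 0)
    (hg : ∀ u v w : W, f (g u) (g v) (g w) = e * f u v w)
    (A : W →ₗ[ℂ] W →ₗ[ℂ] W) (hAsym : ∀ u v : W, A u v = A v u)
    (χ : W →ₗ[ℂ] ℂ)
    (hA : ∀ s u v w : W,
      f (A w u) v s + f u (A w v) s + f u v (A w s) = χ w * f u v s)
    (a : ℂ) (h : (W →ₗ[ℂ] ℂ) →ₗ[ℂ] W)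
    (hform : ∀ u v : W, A u v = (a * χ u) • v + (a * χ v) • u + h (f u v)) :
    (∀ s u v w : W,
      f (g (A (g.symm w) (g.symm u))) v s + f u (g (A (g.symm w) (g.symm v))) s
        + f u v (g (A (g.symm w) (g.symm s))) = χ (g.symm w) * f u v s)
    ∧ (∀ u v : W, g (A (g.symm u) (g.symm v))
        = (a * χ (g.symm u)) • v + (a * χ (g.symm v)) • u
          + e⁻¹ • g (h ((f u v).comp g.toLinearMap))) := by
  have key : ∀ u v w : W, f u v w = e * f (g.symm u) (g.symm v) (g.symm w) := by
    intro u v w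
    conv_lhs => rw [← g.apply_symm_apply u, ← g.apply_symm_apply v,
      ← g.apply_symm_apply w, hg]
  constructor
  · intro s u v w
    rw [key (g (A (g.symm w) (g.symm u))) v s, key u (g (A (g.symm w) (g.symm v))) s,
      key u v (g (A (g.symm w) (g.symm s))), g.symm_apply_apply, g.symm_apply_apply,
      g.symm_apply_apply, key u v s]
    rw [← mul_add, ← mul_add, hA]
    ring
  · intro u v
    have hfun : f (g.symm u) (g.symm v) = e⁻¹ • ((f u v).comp g.toLinearMap) := by
      ext w
      simp only [LinearMap.smul_apply, LinearMap.coe_comp, Function.comp_apply,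
        LinearEquiv.coe_coe, smul_eq_mul]
      rw [key u v (g w), g.symm_apply_apply]
      field_simp
    rw [hform, hfun, map_add, map_add, map_smul, map_smul, map_smul, map_smul,
      g.apply_symm_apply, g.apply_symm_apply]
end

section
/- Assume f is irreducible, and let g ∈ GL(W) be such that f(w,w,w) = 0 implies f(g(w),g(w),g(w)) = 0 for every w ∈ W (i.e. g maps the affine cone Ŷ into itself). Then there exists a nonzero constant c ∈ ℂ with f(g(u), g(v), g(w)) = c·f(u,v,w) for all u, v, w ∈ W. -/
/-!
In coordinates, `w ↦ f w w w` is a homogeneous cubic polynomial `P`. The factors of a nonzero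
homogeneous polynomial are homogeneous, so a nontrivial factorization of `P` would write it as a
linear form times a quadratic form; hence `P` is irreducible. The cubic `Q` of `f ∘ g` vanishes
on the zero locus of `P`, so by the Nullstellensatz `P ∣ Q`, and since both are cubics
`Q = c • P`. Polarization turns `f (g w) (g w) (g w) = c * f w w w` into the trilinear identity.
-/

open MvPolynomial

section Polarization

variable {K W : Type*} [Field K] [CharZero K] [AddCommGroup W] [Module K W]

theorem trilinear_eq_zero_of_diag_eq_zero (T : W →ₗ[K] W →ₗ[K] W →ₗ[K] K)
    (h₁₂ : ∀ u v w, T u v w = T v u w) (h₂₃ : ∀ u v w, T u v w = T u w v)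
    (hdiag : ∀ w, T w w w = 0) : T = 0 := by
  have hpair : ∀ u v, T u u v = 0 := by
    intro u v
    have e₁ := hdiag (u + v)
    have e₂ := hdiag (u - v)
    simp only [map_add, map_sub, LinearMap.add_apply, LinearMap.sub_apply, hdiag,
      h₁₂ v u, h₂₃ u v u, h₂₃ v v u] at e₁ e₂
    linear_combination e₁ / 6 - e₂ / 6
  ext u v w
  have e := hpair (u + w) v
  simp only [map_add, LinearMap.add_apply, hpair] at e
  rw [LinearMap.zero_apply, LinearMap.zero_apply, LinearMap.zero_apply, h₂₃ u v w]
  linear_combination e / 2 - h₁₂ w u v / 2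

end Polarization

namespace MvPolynomial

section CommSemiring

variable {σ R : Type*} [CommSemiring R]

/-- `A(t • X) = ∑ₖ (homogeneousComponent k A) tᵏ`, so `t` records the degree. -/
noncomputable def homogeneousExpansion : MvPolynomial σ R →ₐ[R] Polynomial (MvPolynomial σ R) :=
  aeval fun i => Polynomial.C (X i) * Polynomial.X

theorem homogeneousExpansion_monomial (d : σ →₀ ℕ) (r : R) :
    homogeneousExpansion (monomial d r) =
      Polynomial.C (monomial d r) * Polynomial.X ^ d.degree := by
  rw [homogeneousExpansion, aeval_monomial, monomial_eq, Finsupp.degree_apply,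
    ← Finset.prod_pow_eq_pow_sum]
  simp only [mul_pow, map_mul, Finsupp.prod, map_prod, map_pow, Finset.prod_mul_distrib,
    Polynomial.algebraMap_apply, algebraMap_eq]
  ring

theorem homogeneousExpansion_of_isHomogeneous {A : MvPolynomial σ R} {n : ℕ}
    (hA : A.IsHomogeneous n) :
    homogeneousExpansion A = Polynomial.C A * Polynomial.X ^ n := by
  induction hA using IsWeightedHomogeneous.induction_on with
  | zero => simp
  | add p q _ _ hp hq => rw [map_add, hp, hq, map_add, add_mul]
  | monomial d r hr =>
    rw [homogeneousExpansion_monomial, Finsupp.degree_eq_weight_one, ← hr]; rfl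

theorem coeff_homogeneousExpansion (A : MvPolynomial σ R) (k : ℕ) :
    (homogeneousExpansion A).coeff k = homogeneousComponent k A := by
  classical
  conv_lhs => rw [← sum_homogeneousComponent A]
  simp only [map_sum, Polynomial.finsetSum_coeff,
    homogeneousExpansion_of_isHomogeneous (homogeneousComponent_isHomogeneous _ A),
    Polynomial.coeff_C_mul_X_pow]
  rw [Finset.sum_ite_eq, ite_eq_left_iff, Finset.mem_range, not_lt]
  exact fun hk => (homogeneousComponent_eq_zero k A hk).symm

theorem homogeneousExpansion_ne_zero {A : MvPolynomial σ R} (hA : A ≠ 0) :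
    homogeneousExpansion A ≠ 0 := by
  intro h
  refine hA (sum_homogeneousComponent A ▸ Finset.sum_eq_zero fun k _ => ?_)
  rw [← coeff_homogeneousExpansion, h, Polynomial.coeff_zero]

theorem isHomogeneous_of_natTrailingDegree_eq_of_natDegree_eq {A : MvPolynomial σ R} {n : ℕ}
    (htrail : (homogeneousExpansion A).natTrailingDegree = n)
    (hdeg : (homogeneousExpansion A).natDegree = n) : A.IsHomogeneous n := by
  rw [← sum_homogeneousComponent A]
  refine IsHomogeneous.sum _ _ _ fun k _ => ?_
  rcases lt_trichotomy k n with hk | rfl | hk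
  · rw [← coeff_homogeneousExpansion,
      Polynomial.coeff_eq_zero_of_lt_natTrailingDegree (htrail ▸ hk)]
    exact isHomogeneous_zero _ _ _
  · exact homogeneousComponent_isHomogeneous _ A
  · rw [← coeff_homogeneousExpansion, Polynomial.coeff_eq_zero_of_natDegree_lt (hdeg ▸ hk)]
    exact isHomogeneous_zero _ _ _

theorem IsHomogeneous.eq_C_of_zero {A : MvPolynomial σ R} (hA : A.IsHomogeneous 0) :
    A = C (coeff 0 A) :=
  totalDegree_eq_zero_iff_eq_C.1 ((totalDegree_zero_iff_isHomogeneous σ).2 hA)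

end CommSemiring

section IsDomain

variable {σ R : Type*} [CommRing R] [IsDomain R]

/-- Over a domain, degree and trailing degree in `t` are additive on `A(t • X) * B(t • X)`;
since `P(t • X) = P tᵐ` they agree for both factors. -/
theorem IsHomogeneous.exists_isHomogeneous_of_eq_mul
    {P A B : MvPolynomial σ R} {m : ℕ} (hP : P.IsHomogeneous m) (hP0 : P ≠ 0)
    (hAB : P = A * B) : ∃ a b, a + b = m ∧ A.IsHomogeneous a ∧ B.IsHomogeneous b := by
  have hA := homogeneousExpansion_ne_zero (left_ne_zero_of_mul (hAB ▸ hP0))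
  have hB := homogeneousExpansion_ne_zero (right_ne_zero_of_mul (hAB ▸ hP0))
  have hprod : homogeneousExpansion A * homogeneousExpansion B = Polynomial.monomial m P := by
    rw [← map_mul, ← hAB, homogeneousExpansion_of_isHomogeneous hP,
      Polynomial.C_mul_X_pow_eq_monomial]
  have hdeg := Polynomial.natDegree_mul hA hB
  have htrail := Polynomial.natTrailingDegree_mul hA hB
  rw [hprod, Polynomial.natDegree_monomial_eq m hP0] at hdeg
  rw [hprod, Polynomial.natTrailingDegree_monomial hP0] at htrail
  have hA' := Polynomial.natTrailingDegree_le_natDegree (p := homogeneousExpansion A)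
  have hB' := Polynomial.natTrailingDegree_le_natDegree (p := homogeneousExpansion B)
  exact ⟨_, _, hdeg.symm, isHomogeneous_of_natTrailingDegree_eq_of_natDegree_eq (by omega) rfl,
    isHomogeneous_of_natTrailingDegree_eq_of_natDegree_eq (by omega) rfl⟩

end IsDomain

section Field

variable {σ K : Type*} [Field K]

theorem IsHomogeneous.isUnit_of_zero {A : MvPolynomial σ K} (hA : A.IsHomogeneous 0)
    (hA0 : A ≠ 0) : IsUnit A := by
  rw [hA.eq_C_of_zero] at hA0 ⊢
  exact (isUnit_iff_ne_zero.2 fun h => hA0 (by rw [h, C_0])).map C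

theorem irreducible_of_isHomogeneous_three {P : MvPolynomial σ K} (hP : P.IsHomogeneous 3)
    (hP0 : P ≠ 0)
    (hfac : ∀ A B : MvPolynomial σ K, A.IsHomogeneous 1 → B.IsHomogeneous 2 → P ≠ A * B) :
    Irreducible P where
  not_isUnit hunit := by
    obtain ⟨Q, hPQ⟩ := hunit.exists_right_inv
    obtain ⟨a, b, hab, hPa, -⟩ :=
      (isHomogeneous_one σ K).exists_isHomogeneous_of_eq_mul one_ne_zero hPQ.symm
    have := hP.inj_right hPa hP0
    omega
  isUnit_or_isUnit A B hAB := by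
    obtain ⟨a, b, hab, hA, hB⟩ := hP.exists_isHomogeneous_of_eq_mul hP0 hAB
    rcases Nat.eq_zero_or_pos a with rfl | ha
    · exact .inl (hA.isUnit_of_zero (left_ne_zero_of_mul (hAB ▸ hP0)))
    rcases Nat.eq_zero_or_pos b with rfl | hb
    · exact .inr (hB.isUnit_of_zero (right_ne_zero_of_mul (hAB ▸ hP0)))
    exfalso
    obtain ⟨rfl, rfl⟩ | ⟨rfl, rfl⟩ : a = 1 ∧ b = 2 ∨ a = 2 ∧ b = 1 := by omega
    · exact hfac A B hA hB hAB
    · exact hfac B A hB hA (hAB.trans (mul_comm A B))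

theorem exists_eq_C_mul_of_forall_eval_eq_zero [IsAlgClosed K] [Finite σ]
    {P Q : MvPolynomial σ K} {n : ℕ} (hirr : Irreducible P) (hP : P.IsHomogeneous n)
    (hQ : Q.IsHomogeneous n) (hvanish : ∀ x, eval x P = 0 → eval x Q = 0) :
    ∃ c, Q = C c * P := by
  have : (Ideal.span {P}).IsPrime := (Ideal.span_singleton_prime hirr.ne_zero).2 hirr.prime
  obtain ⟨R, rfl⟩ : P ∣ Q := by
    rw [← Ideal.mem_span_singleton, ← IsPrime.vanishingIdeal_zeroLocus (K := K) (Ideal.span {P})]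
    exact fun x hx => hvanish x (hx P (Ideal.subset_span rfl))
  rcases eq_or_ne (P * R) 0 with hPR | hPR
  · exact ⟨0, by rw [hPR, C_0, zero_mul]⟩
  obtain ⟨a, b, hab, hPa, hR⟩ := hQ.exists_isHomogeneous_of_eq_mul hPR rfl
  obtain rfl : b = 0 := by have := hP.inj_right hPa hirr.ne_zero; omega
  exact ⟨_, by rw [mul_comm, ← hR.eq_C_of_zero]⟩

end Field

end MvPolynomial

section CubicPolynomial

variable {K W ι : Type*} [CommSemiring K] [AddCommMonoid W] [Module K W] [Fintype ι]

noncomputable def cubicPolynomial (f : W →ₗ[K] W →ₗ[K] W →ₗ[K] K) (v : ι → W) :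
    MvPolynomial ι K :=
  ∑ i, ∑ j, ∑ k, C (f (v i) (v j) (v k)) * (X i * X j * X k)

theorem isHomogeneous_cubicPolynomial (f : W →ₗ[K] W →ₗ[K] W →ₗ[K] K) (v : ι → W) :
    (cubicPolynomial f v).IsHomogeneous 3 :=
  IsHomogeneous.sum _ _ _ fun i _ => IsHomogeneous.sum _ _ _ fun j _ =>
    IsHomogeneous.sum _ _ _ fun k _ =>
      ((((isHomogeneous_X K i).mul (isHomogeneous_X K j)).mul (isHomogeneous_X K k)).C_mul _)

theorem eval_cubicPolynomial (f : W →ₗ[K] W →ₗ[K] W →ₗ[K] K) (v : ι → W) (x : ι → K) :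
    eval x (cubicPolynomial f v) = f (∑ i, x i • v i) (∑ i, x i • v i) (∑ i, x i • v i) := by
  simp only [cubicPolynomial, map_sum (eval x), eval_mul, eval_C, eval_X]
  rw [map_sum f, LinearMap.sum_apply, LinearMap.sum_apply]
  refine Finset.sum_congr rfl fun i _ => ?_
  rw [map_sum (f _), LinearMap.sum_apply]
  refine Finset.sum_congr rfl fun j _ => ?_
  rw [map_sum]
  refine Finset.sum_congr rfl fun k _ => ?_
  simp only [map_smul, LinearMap.smul_apply, smul_eq_mul]
  ring

theorem eval_cubicPolynomial_equivFun (f : W →ₗ[K] W →ₗ[K] W →ₗ[K] K) (b : Module.Basis ι K W)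
    (w : W) : eval (b.equivFun w) (cubicPolynomial f b) = f w w w := by
  rw [eval_cubicPolynomial, b.sum_equivFun]

end CubicPolynomial

section FormsOfPolynomials

variable {K W σ : Type*}

theorem exists_linearMap_eval_eq [CommSemiring K] [AddCommMonoid W] [Module K W]
    (e : W →ₗ[K] σ → K) {A : MvPolynomial σ K} (hA : A.IsHomogeneous 1) :
    ∃ l : W →ₗ[K] K, ∀ w, l w = eval (e w) A := by
  rw [← mem_homogeneousSubmodule, homogeneousSubmodule_one_eq_span_X] at hA
  induction hA using Submodule.span_induction with
  | mem _ h =>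
    obtain ⟨i, rfl⟩ := h
    exact ⟨LinearMap.proj i ∘ₗ e, fun w => by simp⟩
  | zero => exact ⟨0, fun w => by simp⟩
  | add A₁ A₂ _ _ h₁ h₂ =>
    obtain ⟨l₁, hl₁⟩ := h₁
    obtain ⟨l₂, hl₂⟩ := h₂
    exact ⟨l₁ + l₂, fun w => by simp [hl₁, hl₂]⟩
  | smul c A _ h =>
    obtain ⟨l, hl⟩ := h
    exact ⟨c • l, fun w => by simp [hl]⟩

theorem exists_symmetric_bilinear_eval_eq [Field K] [CharZero K] [AddCommGroup W] [Module K W]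
    (e : W →ₗ[K] σ → K) {B : MvPolynomial σ K} (hB : B.IsHomogeneous 2) :
    ∃ β : W →ₗ[K] W →ₗ[K] K, (∀ u v, β u v = β v u) ∧ ∀ w, β w w = eval (e w) B := by
  rw [← mem_homogeneousSubmodule, ← homogeneousSubmodule_one_pow, pow_two] at hB
  induction hB using Submodule.mul_induction_on' with
  | mem_mul_mem A₁ h₁ A₂ h₂ =>
    obtain ⟨l₁, hl₁⟩ := exists_linearMap_eval_eq e ((mem_homogeneousSubmodule 1 A₁).1 h₁)
    obtain ⟨l₂, hl₂⟩ := exists_linearMap_eval_eq e ((mem_homogeneousSubmodule 1 A₂).1 h₂)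
    refine ⟨(2⁻¹ : K) • (l₁.smulRight l₂ + l₂.smulRight l₁), fun u v => ?_, fun w => ?_⟩
    · simp only [LinearMap.smul_apply, LinearMap.add_apply, LinearMap.smulRight_apply,
        smul_eq_mul]
      ring
    · simp only [LinearMap.smul_apply, LinearMap.add_apply, LinearMap.smulRight_apply,
        smul_eq_mul, eval_mul, hl₁, hl₂]
      ring
  | add B₁ _ B₂ _ h₁ h₂ =>
    obtain ⟨β₁, hβ₁, hβ₁'⟩ := h₁
    obtain ⟨β₂, hβ₂, hβ₂'⟩ := h₂
    exact ⟨β₁ + β₂, fun u v => by simp [hβ₁, hβ₂], fun w => by simp [hβ₁', hβ₂']⟩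

end FormsOfPolynomials

section Irreducibility

variable {K W ι : Type*} [Field K] [CharZero K] [AddCommGroup W] [Module K W] [Fintype ι]

theorem irreducible_cubicPolynomial (f : W →ₗ[K] W →ₗ[K] W →ₗ[K] K) (b : Module.Basis ι K W)
    (hf : ∃ w, f w w w ≠ 0)
    (hirr : ¬ ∃ (lam : W →ₗ[K] K) (B : W →ₗ[K] W →ₗ[K] K),
      lam ≠ 0 ∧ B ≠ 0 ∧ (∀ u v : W, B u v = B v u) ∧ ∀ w : W, f w w w = lam w * B w w) :
    Irreducible (cubicPolynomial f b) := by
  have heval := eval_cubicPolynomial_equivFun f b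
  have hP0 : cubicPolynomial f b ≠ 0 := by
    intro h
    obtain ⟨w, hw⟩ := hf
    exact hw (by rw [← heval, h, map_zero])
  have eq_zero_of_eval : ∀ D : MvPolynomial ι K, (∀ w, eval (b.equivFun w) D = 0) → D = 0 :=
    fun D hD => MvPolynomial.funext fun x => by
      rw [map_zero, ← b.equivFun.apply_symm_apply x]
      exact hD _
  refine irreducible_of_isHomogeneous_three (isHomogeneous_cubicPolynomial f b) hP0
    fun A B hA hB hAB => hirr ?_
  obtain ⟨l, hl⟩ := exists_linearMap_eval_eq b.equivFun.toLinearMap hA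
  obtain ⟨β, hβ_symm, hβ⟩ := exists_symmetric_bilinear_eval_eq b.equivFun.toLinearMap hB
  refine ⟨l, β, ?_, ?_, hβ_symm, fun w => ?_⟩
  · rintro rfl
    exact left_ne_zero_of_mul (hAB ▸ hP0) (eq_zero_of_eval A fun w => (hl w).symm)
  · rintro rfl
    exact right_ne_zero_of_mul (hAB ▸ hP0) (eq_zero_of_eval B fun w => (hβ w).symm)
  · rw [← heval, hAB, eval_mul, hl, hβ]
    rfl

end Irreducibility

/-- If `f` is irreducible and `g ∈ GL(W)` maps the affine cone `Ŷ`
into itself, then `g` scales `f` by some nonzero constant `c`. -/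
theorem linear_automorphism_of_cubic_scales_form
    {W : Type*} [AddCommGroup W] [Module ℂ W] [FiniteDimensional ℂ W]
    (f : W →ₗ[ℂ] W →ₗ[ℂ] W →ₗ[ℂ] ℂ)
    (hsym1 : ∀ u v w : W, f u v w = f v u w)
    (hsym2 : ∀ u v w : W, f u v w = f u w v)
    (hf : f ≠ 0)
    (hirr : ¬ ∃ (lam : W →ₗ[ℂ] ℂ) (B : W →ₗ[ℂ] W →ₗ[ℂ] ℂ),
      lam ≠ 0 ∧ B ≠ 0 ∧ (∀ u v : W, B u v = B v u) ∧ ∀ w : W, f w w w = lam w * B w w)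
    (g : W ≃ₗ[ℂ] W)
    (hg : ∀ w : W, f w w w = 0 → f (g w) (g w) (g w) = 0) :
    ∃ c : ℂ, c ≠ 0 ∧ ∀ u v w : W, f (g u) (g v) (g w) = c * f u v w := by
  obtain ⟨w₀, hw₀⟩ : ∃ w, f w w w ≠ 0 := by
    by_contra! h
    exact hf (trilinear_eq_zero_of_diag_eq_zero f hsym1 hsym2 h)
  let fg := (f.compl₁₂ g.toLinearMap g.toLinearMap).compr₂ (LinearMap.lcomp ℂ ℂ g.toLinearMap)
  have hfg : ∀ u v w, fg u v w = f (g u) (g v) (g w) := fun _ _ _ => rfl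
  let b := Module.finBasis ℂ W
  obtain ⟨c, hc⟩ := exists_eq_C_mul_of_forall_eval_eq_zero
    (irreducible_cubicPolynomial f b ⟨w₀, hw₀⟩ hirr) (isHomogeneous_cubicPolynomial f b)
    (isHomogeneous_cubicPolynomial fg b) fun x hx => by
      rw [← b.equivFun.apply_symm_apply x, eval_cubicPolynomial_equivFun] at hx ⊢
      exact hg _ hx
  have hscale : ∀ w, f (g w) (g w) (g w) = c * f w w w := fun w => by
    rw [← hfg, ← eval_cubicPolynomial_equivFun fg b, hc, eval_mul, eval_C,
      eval_cubicPolynomial_equivFun]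
  have hc0 : c ≠ 0 := by
    rintro rfl
    exact hw₀ (by simpa using hscale (g.symm w₀))
  refine ⟨c, hc0, fun u v w => ?_⟩
  have hzero := trilinear_eq_zero_of_diag_eq_zero (fg - c • f)
    (fun u v w => by
      simp only [LinearMap.sub_apply, LinearMap.smul_apply, hfg, hsym1 u, hsym1 (g u)])
    (fun u v w => by
      simp only [LinearMap.sub_apply, LinearMap.smul_apply, hfg, hsym2 u, hsym2 (g u)])
    (fun w => by simp [hfg, hscale])
  simpa [hfg, sub_eq_zero] using congr($hzero u v w)
end

section
/- Let λ ∈ W* be a nonzero linear functional with kernel the hyperplane 𝓗 ⊂ W, and let U, V ⊆ W be linear subspaces with U ⊄ 𝓗, V ⊄ 𝓗, and U + V = W. Then the linear span of the set {λ(v)·u + λ(u)·v : u ∈ U, v ∈ V} has codimension at most 1 in W. -/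
/-- For a nonzero `λ ∈ W*` with kernel the hyperplane `𝓗`, and
subspaces `U, V` with `U ⊄ 𝓗`, `V ⊄ 𝓗`, `U + V = W`, the span of
`{λ(v)·u + λ(u)·v : u ∈ U, v ∈ V}` has codimension at most 1 in `W`. -/
theorem span_of_mixed_terms_codim_le_one
    {W : Type*} [AddCommGroup W] [Module ℂ W] [FiniteDimensional ℂ W]
    (lam : W →ₗ[ℂ] ℂ) (hlam : lam ≠ 0)
    (U V : Submodule ℂ W)
    (hU : ¬ U ≤ LinearMap.ker lam) (hV : ¬ V ≤ LinearMap.ker lam)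
    (hUV : U ⊔ V = ⊤) :
    Module.finrank ℂ W ≤
      Module.finrank ℂ
        (Submodule.span ℂ {x : W | ∃ u ∈ U, ∃ v ∈ V, x = lam v • u + lam u • v}) + 1 := by
  classical
  set S := Submodule.span ℂ {x : W | ∃ u ∈ U, ∃ v ∈ V, x = lam v • u + lam u • v} with hS
  rw [SetLike.le_def] at hU hV
  push_neg at hU hV
  obtain ⟨u₀, hu₀U, hu₀⟩ := hU
  obtain ⟨v₀, hv₀V, hv₀⟩ := hV
  rw [LinearMap.mem_ker] at hu₀ hv₀
  have hv₀ne : v₀ ≠ 0 := fun h => hv₀ (by simp [h])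
  set T := S ⊔ Submodule.span ℂ {v₀} with hT
  have hmemS : ∀ u ∈ U, ∀ v ∈ V, lam v • u + lam u • v ∈ S := fun u hu v hv =>
    Submodule.subset_span ⟨u, hu, v, hv, rfl⟩
  have hv₀T : v₀ ∈ T := Submodule.mem_sup_right (Submodule.mem_span_singleton_self v₀)
  have hu₀T : u₀ ∈ T := by
    have hp : lam v₀ • u₀ + lam u₀ • v₀ ∈ T := Submodule.mem_sup_left (hmemS u₀ hu₀U v₀ hv₀V)
    have h1 : lam v₀ • u₀ ∈ T := by
      have := T.sub_mem hp (T.smul_mem (lam u₀) hv₀T)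
      simpa using this
    have := T.smul_mem (lam v₀)⁻¹ h1
    rwa [smul_smul, inv_mul_cancel₀ hv₀, one_smul] at this
  have hTtop : T = ⊤ := by
    rw [eq_top_iff]
    intro w _
    have hw : w ∈ U ⊔ V := hUV ▸ Submodule.mem_top
    obtain ⟨u, hu, v, hv, rfl⟩ := Submodule.mem_sup.mp hw
    have ha : lam v₀ • u + lam u • v₀ ∈ T := Submodule.mem_sup_left (hmemS u hu v₀ hv₀V)
    have hb : lam v • u₀ + lam u₀ • v ∈ T := Submodule.mem_sup_left (hmemS u₀ hu₀U v hv)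
    have hc : (lam u₀ * lam v₀) • (u + v) ∈ T := by
      have h1 : lam u₀ • (lam v₀ • u + lam u • v₀) + lam v₀ • (lam v • u₀ + lam u₀ • v)
          - (lam u * lam u₀) • v₀ - (lam v * lam v₀) • u₀ = (lam u₀ * lam v₀) • (u + v) := by
        simp only [smul_add, smul_smul]
        module
      rw [← h1]
      exact T.sub_mem (T.sub_mem (T.add_mem (T.smul_mem _ ha) (T.smul_mem _ hb))
        (T.smul_mem _ hv₀T)) (T.smul_mem _ hu₀T)
    have := T.smul_mem (lam u₀ * lam v₀)⁻¹ hc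
    rwa [smul_smul, inv_mul_cancel₀ (mul_ne_zero hu₀ hv₀), one_smul] at this
  have h2 : Module.finrank ℂ T ≤ Module.finrank ℂ S + Module.finrank ℂ (Submodule.span ℂ {v₀}) := by
    have := Submodule.finrank_sup_add_finrank_inf_eq S (Submodule.span ℂ {v₀})
    rw [← hT] at this
    omega
  calc Module.finrank ℂ W = Module.finrank ℂ (⊤ : Submodule ℂ W) := (finrank_top ℂ W).symm
    _ = Module.finrank ℂ T := by rw [hTtop]
    _ ≤ Module.finrank ℂ S + Module.finrank ℂ (Submodule.span ℂ {v₀}) := h2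
    _ = Module.finrank ℂ S + 1 := by rw [finrank_span_singleton hv₀ne]
end

section
/- Let λ ∈ W* be a nonzero linear functional with kernel the hyperplane 𝓗 ⊂ W, let A : W × W → W be a symmetric bilinear map with A_{uv} = 0 whenever u, v ∈ 𝓗, and fix p ∈ W with λ(p) = 1. Then there exists an endomorphism φ of W with φ(p) = 0 such that A_{uv} = λ(u)·φ(v) + λ(v)·φ(u) + λ(u)·λ(v)·A_{pp} for all u, v ∈ W. -/
/-- If a symmetric bilinear map `A` vanishes on the hyperplane
`𝓗 = ker λ` and `λ(p) = 1`, then `A_{uv} = λ(u)·φ(v) + λ(v)·φ(u) + λ(u)λ(v)·A_{pp}`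
for some endomorphism `φ` with `φ(p) = 0`. -/
theorem bilinear_vanishing_on_hyperplane_structure
    {W : Type*} [AddCommGroup W] [Module ℂ W] [FiniteDimensional ℂ W]
    (lam : W →ₗ[ℂ] ℂ) (hlam : lam ≠ 0)
    (A : W →ₗ[ℂ] W →ₗ[ℂ] W) (hAsym : ∀ u v : W, A u v = A v u)
    (hA0 : ∀ u v : W, lam u = 0 → lam v = 0 → A u v = 0)
    (p : W) (hp : lam p = 1) :
    ∃ φ : W →ₗ[ℂ] W, φ p = 0 ∧
      ∀ u v : W, A u v = lam u • φ v + lam v • φ u + (lam u * lam v) • A p p := by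
  refine ⟨A p - lam.smulRight (A p p), ?_, ?_⟩
  · simp [hp]
  · intro u v
    have hu : lam (u - lam u • p) = 0 := by simp [hp]
    have hv : lam (v - lam v • p) = 0 := by simp [hp]
    have key : A (u - lam u • p) (v - lam v • p) = 0 := hA0 _ _ hu hv
    have expand : A u v - lam v • A u p - lam u • A p v + (lam u * lam v) • A p p = 0 := by
      have := key
      simp only [map_sub, map_smul, LinearMap.sub_apply, LinearMap.smul_apply] at this
      linear_combination (norm := module) this
    have hup : A u p = A p u := hAsym u p
    simp only [LinearMap.sub_apply, LinearMap.smulRight_apply]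
    rw [hup] at expand
    have : A u v = lam v • A p u + lam u • A p v - (lam u * lam v) • A p p := by
      linear_combination (norm := module) expand
    rw [this]
    module
end

section
/- Let A be a prolongation of f with character χ, and let w ∈ Ŷ satisfy f_{ww} ≠ 0. Suppose there is exactly one t ∈ ℂ such that t·w + A_{ww} ∈ Sing(Ŷ). Then this unique t equals -χ(w)/2; in particular A_{ww} - (χ(w)/2)·w ∈ Sing(Ŷ), and f(A_{ww}, A_{ww}, u) = (χ(w)/2)²·f(w,w,u) for all u ∈ W. -/
/-- Let `A` be a prolongation of `f` with character `χ`, `w ∈ Ŷ`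
with `f_{ww} ≠ 0`. If there is exactly one `t ∈ ℂ` with `t·w + A_{ww} ∈ Sing(Ŷ)`,
then this `t` is `-χ(w)/2`; in particular `A_{ww} - (χ(w)/2)·w ∈ Sing(Ŷ)` and
`f(A_{ww}, A_{ww}, u) = (χ(w)/2)²·f(w,w,u)` for all `u`. -/
theorem unique_singular_point_on_line
    {W : Type*} [AddCommGroup W] [Module ℂ W] [FiniteDimensional ℂ W]
    (f : W →ₗ[ℂ] W →ₗ[ℂ] W →ₗ[ℂ] ℂ)
    (hsym1 : ∀ u v w : W, f u v w = f v u w)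
    (hsym2 : ∀ u v w : W, f u v w = f u w v)
    (A : W →ₗ[ℂ] W →ₗ[ℂ] W) (hAsym : ∀ u v : W, A u v = A v u)
    (χ : W →ₗ[ℂ] ℂ)
    (hA : ∀ s u v w : W,
      f (A w u) v s + f u (A w v) s + f u v (A w s) = χ w * f u v s)
    (w : W) (hw : f w w w = 0) (hww : f w w ≠ 0)
    (huniq : ∃! t : ℂ, f (t • w + A w w) (t • w + A w w) = 0) :
    (∀ t : ℂ, f (t • w + A w w) (t • w + A w w) = 0 → t = -(χ w) / 2)
    ∧ f (A w w - (χ w / 2) • w) (A w w - (χ w / 2) • w) = 0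
    ∧ ∀ u : W, f (A w w) (A w w) u = (χ w / 2) ^ 2 * f w w u := by
  obtain ⟨t0, ht0, huniq'⟩ := huniq
  set x := A w w with hx
  -- key1 : f (A w p) w w = 0 for every p
  have key1 : ∀ p : W, f (A w p) w w = 0 := by
    intro p
    have h := hA w w w p
    rw [hw] at h
    have e1 : f w (A p w) w = f (A p w) w w := hsym1 w (A p w) w
    have e2 : f w w (A p w) = f (A p w) w w := by
      rw [hsym2 w w (A p w), hsym1 w (A p w) w]
    rw [hAsym p w] at h e1 e2
    rw [e1, e2] at h
    have : (3 : ℂ) * f (A w p) w w = 0 := by linear_combination h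
    have h3 : (3 : ℂ) ≠ 0 := by norm_num
    exact (mul_eq_zero.mp this).resolve_left h3
  -- keyb : f w x p = χ w / 2 * f w w p for every p
  have keyb : ∀ p : W, f w x p = χ w / 2 * f w w p := by
    intro p
    have h := hA w p w w
    rw [key1 p] at h
    have e1 : f p x w = f w x p := by
      rw [hsym1 p x w, hsym2 x p w, hsym1 x w p]
    have e2 : f p w x = f w x p := by
      rw [hsym2 p w x, e1]
    have e3 : f p w w = f w w p := by
      rw [hsym1 p w w, hsym2 w p w]
    rw [← hx, e1, e2, e3] at h
    field_simp
    linear_combination h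
  -- expansion of the quadratic
  have expand : ∀ (t : ℂ) (u : W),
      f (t • w + x) (t • w + x) u = (t ^ 2 + t * χ w) * f w w u + f x x u := by
    intro t u
    have e2 : f x w u = f w x u := hsym1 x w u
    simp only [map_add, map_smul, LinearMap.add_apply, LinearMap.smul_apply,
      smul_eq_mul]
    rw [e2, keyb u]
    ring
  have ht0' : ∀ u : W, (t0 ^ 2 + t0 * χ w) * f w w u + f x x u = 0 := by
    intro u
    have := DFunLike.congr_fun ht0 u
    rw [expand t0 u] at this
    simpa using this
  -- the reflected point is also a root
  have hrefl : f ((-(χ w) - t0) • w + x) ((-(χ w) - t0) • w + x) = 0 := by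
    ext u
    rw [expand]
    have : ((-(χ w) - t0) ^ 2 + (-(χ w) - t0) * χ w) = t0 ^ 2 + t0 * χ w := by ring
    rw [this]
    simpa using ht0' u
  have ht0val : t0 = -(χ w) / 2 := by
    have h := huniq' _ hrefl
    linear_combination -h / 2
  refine ⟨?_, ?_, ?_⟩
  · intro t ht
    rw [huniq' t ht, ht0val]
  · have hrw : x - (χ w / 2) • w = (-(χ w) / 2) • w + x := by
      rw [neg_div, neg_smul, ← sub_eq_neg_add]
    rw [hrw, ← ht0val]
    exact ht0
  · intro u
    have h := ht0' u
    rw [ht0val] at h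
    linear_combination h
end

section
/- Assume f ≠ 0. Let λ ∈ W* and suppose the symmetric bilinear map A defined by A_{uv} := (λ(u)·v + λ(v)·u)/2 is a prolongation of f with character χ. Then χ = 3λ, and λ(u)·f(w,u,u) = λ(w)·f(u,u,u) for all u, w ∈ W. Consequently, if λ ≠ 0 then f(u,u,u) = 0 for every u ∈ ker λ, i.e. the cubic form vanishes on the hyperplane ker λ. -/
/-- Assume `f ≠ 0`. If `A_{uv} = (λ(u)·v + λ(v)·u)/2` is a
prolongation of `f` with character `χ`, then `χ = 3λ`,
`λ(u)·f(w,u,u) = λ(w)·f(u,u,u)` for all `u, w`, and hence if `λ ≠ 0` the cubic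
form vanishes on the hyperplane `ker λ`. -/
theorem scalar_type_prolongation
    {W : Type*} [AddCommGroup W] [Module ℂ W] [FiniteDimensional ℂ W]
    (f : W →ₗ[ℂ] W →ₗ[ℂ] W →ₗ[ℂ] ℂ)
    (hsym1 : ∀ u v w : W, f u v w = f v u w)
    (hsym2 : ∀ u v w : W, f u v w = f u w v)
    (hf : f ≠ 0)
    (lam : W →ₗ[ℂ] ℂ) (χ : W →ₗ[ℂ] ℂ)
    (hA : ∀ s u v w : W,
      f ((2⁻¹ : ℂ) • (lam w • u + lam u • w)) v s
        + f u ((2⁻¹ : ℂ) • (lam w • v + lam v • w)) s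
        + f u v ((2⁻¹ : ℂ) • (lam w • s + lam s • w)) = χ w * f u v s) :
    χ = (3 : ℂ) • lam
    ∧ (∀ u w : W, lam u * f w u u = lam w * f u u u)
    ∧ (lam ≠ 0 → ∀ u : W, lam u = 0 → f u u u = 0) := by
  simp only [map_add, map_smul, LinearMap.add_apply, LinearMap.smul_apply, smul_eq_mul] at hA
  -- full symmetry of f
  have hsym3 : ∀ u v w : W, f u v w = f w v u := by
    intro u v w
    rw [hsym1, hsym2, hsym1]
  -- the master scalar identity
  have key : ∀ s u v w : W, 2 * (χ w * f u v s) =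
      3 * lam w * f u v s + lam u * f w v s + lam v * f u w s + lam s * f u v w := by
    intro s u v w
    linear_combination (-2 : ℂ) * hA s u v w
  -- specialization to cubes
  have key3 : ∀ u w : W, 2 * (χ w * f u u u) =
      3 * lam w * f u u u + 3 * lam u * f w u u := by
    intro u w
    have h := key u u u w
    have s1 : f u w u = f w u u := hsym1 u w u
    have s2 : f u u w = f w u u := hsym3 u u w
    linear_combination h + lam u * s1 + lam u * s2
  -- the ν-identity: (χ-λ)(w) f(u,v,s) = (χ-λ)(u) f(w,v,s)
  have hnu : ∀ u v s w : W, (χ w - lam w) * f u v s = (χ u - lam u) * f w v s := by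
    intro u v s w
    have k1 := key s u v w
    have k2 := key s w v u
    have s1 : f w u s = f u w s := hsym1 w u s
    have s2 : f w v u = f u v w := hsym3 u v w |>.symm
    linear_combination (k1 - k2) / 2 - (lam v / 2) * s1 - (lam s / 2) * s2
  -- main claim: χ = 3λ pointwise
  have main : ∀ w : W, χ w = 3 * lam w := by
    by_cases hcase : ∀ u : W, χ u = lam u
    · -- degenerate case: χ = λ; show λ = 0 (else f = 0 by polarization)
      by_cases hlam : lam = 0
      · intro w
        simp [hlam] at hcase ⊢
        exact hcase w
      · exfalso
        obtain ⟨w0, hw0⟩ : ∃ w0 : W, lam w0 ≠ 0 := by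
          by_contra h
          push_neg at h
          exact hlam (by ext u; simpa using h u)
        -- all cubes vanish
        have hc : ∀ u : W, f u u u = 0 := by
          intro u
          have h1 := key3 u u
          rw [hcase u] at h1
          have hlc : lam u * f u u u = 0 := by linear_combination (-1/4 : ℂ) * h1
          by_cases hu : lam u = 0
          · have h2 := key3 u w0
            rw [hcase w0] at h2
            -- 2 λ(w0) c = 3 λ(w0) c + 3·0 ⇒ λ(w0) c = 0
            have : lam w0 * f u u u = 0 := by
              linear_combination (-1 : ℂ) * h2 - 3 * f w0 u u * hu
            exact (mul_eq_zero.mp this).resolve_left hw0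
          · exact (mul_eq_zero.mp hlc).resolve_left hu
        -- polarization: f = 0, contradiction
        apply hf
        have step1 : ∀ x y : W, f x y y = 0 := by
          intro x y
          have e1 := hc (x + y)
          have e2 := hc (x - y)
          simp only [map_add, map_sub, LinearMap.add_apply, LinearMap.sub_apply] at e1 e2
          have s3 : f y x y = f x y y := hsym1 y x y
          have s4 : f y y x = f y x y := hsym2 y y x
          have h0 := hc x
          linear_combination (e1 + e2) / 6 - h0 / 3 - (2/3 : ℂ) * s3 - (1/3 : ℂ) * s4
        have step2 : ∀ x y z : W, f x y z = 0 := by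
          intro x y z
          have e := step1 x (y + z)
          simp only [map_add, LinearMap.add_apply] at e
          have s5 : f x z y = f x y z := (hsym2 x y z).symm
          linear_combination e / 2 - s5 / 2 - (step1 x y) / 2 - (step1 x z) / 2
        ext x y z
        simp [step2]
    · -- nondegenerate case
      push_neg at hcase
      obtain ⟨u0, hu0⟩ := hcase
      have hν0 : χ u0 - lam u0 ≠ 0 := sub_ne_zero.mpr hu0
      have prod1 : ∀ u v s : W, (χ u0 - lam u0) * f u v s = (χ u - lam u) * f u0 v s :=
        fun u v s => hnu u v s u0
      have prod2 : ∀ v s : W, (χ u0 - lam u0) * f u0 v s = (χ v - lam v) * f u0 u0 s := by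
        intro v s
        rw [hsym1 u0 v s, hsym1 u0 u0 s]
        exact prod1 v u0 s
      have prod3 : ∀ s : W, (χ u0 - lam u0) * f u0 u0 s = (χ s - lam s) * f u0 u0 u0 := by
        intro s
        rw [hsym3 u0 u0 s, hsym3 u0 u0 u0]
        exact prod1 s u0 u0
      have prodf : ∀ u v s : W, (χ u0 - lam u0) ^ 3 * f u v s =
          (χ u - lam u) * (χ v - lam v) * (χ s - lam s) * f u0 u0 u0 := by
        intro u v s
        have h1 := prod1 u v s
        have h2 := prod2 v s
        have h3 := prod3 s
        linear_combination (χ u0 - lam u0) ^ 2 * h1 + (χ u0 - lam u0) * (χ u - lam u) * h2 +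
          (χ u - lam u) * (χ v - lam v) * h3
      have hC : f u0 u0 u0 ≠ 0 := by
        intro h0
        apply hf
        ext x y z
        have hxyz := prodf x y z
        rw [h0, mul_zero] at hxyz
        have := (mul_eq_zero.mp hxyz).resolve_left (pow_ne_zero 3 hν0)
        simpa using this
      -- χ(u0) = 3 λ(u0)
      have h30 : χ u0 = 3 * lam u0 := by
        have h := key3 u0 u0
        have hz : (χ u0 - 3 * lam u0) * (2 * f u0 u0 u0) = 0 := by linear_combination h
        have := (mul_eq_zero.mp hz).resolve_right (mul_ne_zero two_ne_zero hC)
        linear_combination this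
      -- λ(u) ν(u0) = λ(u0) ν(u)
      have hprop : ∀ u : W, lam u * (χ u0 - lam u0) = lam u0 * (χ u - lam u) := by
        intro u
        have h := key u0 u u0 u0
        have p1 := prodf u u0 u0
        have hz : (lam u * (χ u0 - lam u0) - lam u0 * (χ u - lam u)) *
            ((χ u0 - lam u0) ^ 2 * f u0 u0 u0) = 0 := by
          linear_combination (-(χ u0 - lam u0) ^ 3) * h + lam u0 * p1 +
            2 * (χ u0 - lam u0) ^ 3 * f u u0 u0 * h30
        have := (mul_eq_zero.mp hz).resolve_right
          (mul_ne_zero (pow_ne_zero 2 hν0) hC)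
        linear_combination this
      -- conclude χ = 3λ
      intro w
      have h := key3 u0 w
      have p1 := prodf w u0 u0
      have hw := hprop w
      have hz : (χ w - 3 * lam w) * (2 * (χ u0 - lam u0) ^ 3 * f u0 u0 u0) = 0 := by
        linear_combination (χ u0 - lam u0) ^ 3 * h + 3 * lam u0 * p1 -
          3 * (χ u0 - lam u0) ^ 2 * f u0 u0 u0 * hw
      have := (mul_eq_zero.mp hz).resolve_right
        (mul_ne_zero (mul_ne_zero two_ne_zero (pow_ne_zero 3 hν0)) hC)
      linear_combination this
  -- assemble the three conclusions
  have part2 : ∀ u w : W, lam u * f w u u = lam w * f u u u := by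
    intro u w
    have h := key3 u w
    have mw := main w
    linear_combination (-(1:ℂ)/3) * h + (2 * f u u u / 3) * mw
  refine ⟨?_, part2, ?_⟩
  · ext w
    simp [main w, smul_eq_mul]
  · intro hlne u hu
    obtain ⟨w0, hw0⟩ : ∃ w0 : W, lam w0 ≠ 0 := by
      by_contra h
      push_neg at h
      exact hlne (by ext x; simpa using h x)
    have := part2 u w0
    rw [hu, zero_mul] at this
    exact (mul_eq_zero.mp this.symm).resolve_left hw0
end

section
/- Let F ⊆ W be a linear subspace with F ⊆ Ŷ, and let w ∈ F satisfy f_{ww} ≠ 0. Suppose that for every v ∈ F with f_{vv} ≠ 0 one has f_{vv} ∈ ℂ·f_{ww} (i.e. the Gauss map is constant on the smooth points of F). Then for any fixed u' ∈ W with f(w,w,u') ≠ 0, the set F ∩ Sing(Ŷ) equals {v ∈ F : f(v,v,u') = 0}; in particular F ∩ Sing(Ŷ) is the zero locus in F of a single quadratic form, i.e. a hypersurface of degree at most 2 in the linear space F. -/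
theorem LinearMap.eq_zero_of_eq_smul_of_apply_eq_zero {K V M : Type*} [Field K]
    [AddCommGroup V] [Module K V] [AddCommGroup M] [Module K M]
    {φ ψ : V →ₗ[K] M} {c : K} (h : φ = c • ψ) {u : V} (hψ : ψ u ≠ 0) (hφ : φ u = 0) :
    φ = 0 := by
  have hc : c = 0 := by
    rw [h, smul_apply] at hφ
    exact (smul_eq_zero.mp hφ).resolve_right hψ
  rw [h, hc, zero_smul]

theorem singular_locus_in_gauss_fiber_is_quadric_general
    {W : Type*} [AddCommGroup W] [Module ℂ W]
    (f : W →ₗ[ℂ] W →ₗ[ℂ] W →ₗ[ℂ] ℂ)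
    (F : Submodule ℂ W)
    (w : W)
    (hconst : ∀ v ∈ F, f v v ≠ 0 → ∃ c : ℂ, f v v = c • f w w)
    (u' : W) (hu' : f w w u' ≠ 0) :
    ∀ v ∈ F, (f v v = 0 ↔ f v v u' = 0) := by
  intro v hvF
  refine ⟨fun hvv => by rw [hvv, LinearMap.zero_apply], fun hvvu' => ?_⟩
  by_contra hvv
  obtain ⟨c, hc⟩ := hconst v hvF hvv
  exact hvv (LinearMap.eq_zero_of_eq_smul_of_apply_eq_zero hc hu' hvvu')

/-- If a linear subspace `F ⊆ Ŷ` contains `w` with `f_{ww} ≠ 0` and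
the Gauss map is constant on the smooth points of `F` (i.e. `f_{vv} ∈ ℂ·f_{ww}`
whenever `v ∈ F` and `f_{vv} ≠ 0`), then for any `u'` with `f(w,w,u') ≠ 0`,
`F ∩ Sing(Ŷ) = {v ∈ F : f(v,v,u') = 0}`: a degree ≤ 2 hypersurface in `F`. -/
theorem singular_locus_in_gauss_fiber_is_quadric
    {W : Type*} [AddCommGroup W] [Module ℂ W] [FiniteDimensional ℂ W]
    (f : W →ₗ[ℂ] W →ₗ[ℂ] W →ₗ[ℂ] ℂ)
    (hsym1 : ∀ u v w : W, f u v w = f v u w)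
    (hsym2 : ∀ u v w : W, f u v w = f u w v)
    (F : Submodule ℂ W) (hF : ∀ v ∈ F, f v v v = 0)
    (w : W) (hwF : w ∈ F) (hww : f w w ≠ 0)
    (hconst : ∀ v ∈ F, f v v ≠ 0 → ∃ c : ℂ, f v v = c • f w w)
    (u' : W) (hu' : f w w u' ≠ 0) :
    ∀ v ∈ F, (f v v = 0 ↔ f v v u' = 0) :=
  singular_locus_in_gauss_fiber_is_quadric_general f F w hconst u' hu'
end
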